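/- Let F_i = diag(P_{1,i}, P_{2,i}) be (1+n)-qubit block-diagonal matrices where P_{1,i} and P_{2,i} are unitary n-qubit matrices, let λ_i ≥ 0, and define the Lindbladian (with zero internal Hamiltonian) L[ρ] = Σ_i λ_i (F_i ρ F_i† − (1/2){ρ, F_i† F_i}). Then for any (1+n)-qubit matrix ρ with upper-right block S = (⟨0|⊗I)ρ(|1⟩⊗I), the upper-right block of L[ρ] equals Σ_i λ_i (P_{1,i} S P_{2,i}† − S). -/
import Mathlib


open Matrix BigOperators

/-- Bitstrings of length `n`. -/
abbrev BV (n : ℕ) : Type := Fin n → ZMod 2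

/-- The Lindbladian (with zero internal Hamiltonian)
`L[ρ] = ∑ i λᵢ (Fᵢ ρ Fᵢ† − (1/2){ρ, Fᵢ†Fᵢ})` with jump operators
`Fᵢ = diag(P_{1,i}, P_{2,i})`. -/
noncomputable def lindblad {n : ℕ} {ι : Type} [Fintype ι]
    (P1 P2 : ι → Matrix (BV n) (BV n) ℂ) (lam : ι → ℝ)
    (ρ : Matrix (BV n ⊕ BV n) (BV n ⊕ BV n) ℂ) :
    Matrix (BV n ⊕ BV n) (BV n ⊕ BV n) ℂ :=
  ∑ i,
    (lam i : ℂ) •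
      (Matrix.fromBlocks (P1 i) 0 0 (P2 i) * ρ *
          (Matrix.fromBlocks (P1 i) 0 0 (P2 i))ᴴ -
        (1 / 2 : ℂ) •
          (ρ * ((Matrix.fromBlocks (P1 i) 0 0 (P2 i))ᴴ *
              Matrix.fromBlocks (P1 i) 0 0 (P2 i)) +
            ((Matrix.fromBlocks (P1 i) 0 0 (P2 i))ᴴ *
              Matrix.fromBlocks (P1 i) 0 0 (P2 i)) * ρ))

/-- The upper-right block of the Lindbladian `L[ρ]` with block-diagonal unitary jump
operators `Fᵢ = diag(P_{1,i}, P_{2,i})` equals `∑ i λᵢ (P_{1,i} S P_{2,i}† − S)`,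
where `S` is the upper-right block of `ρ`. -/
theorem lindblad_upperRight_block {n : ℕ} {ι : Type} [Fintype ι]
    (P1 P2 : ι → Matrix (BV n) (BV n) ℂ)
    (hP1 : ∀ i, P1 i ∈ Matrix.unitaryGroup (BV n) ℂ)
    (hP2 : ∀ i, P2 i ∈ Matrix.unitaryGroup (BV n) ℂ)
    (lam : ι → ℝ) (hlam : ∀ i, 0 ≤ lam i)
    (ρ : Matrix (BV n ⊕ BV n) (BV n ⊕ BV n) ℂ) :
    (lindblad P1 P2 lam ρ).toBlocks₁₂
      = ∑ i, (lam i : ℂ) •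
          (P1 i * ρ.toBlocks₁₂ * (P2 i)ᴴ - ρ.toBlocks₁₂) := by
  have hF : ∀ i, (Matrix.fromBlocks (P1 i) 0 0 (P2 i))ᴴ *
      Matrix.fromBlocks (P1 i) 0 0 (P2 i) = 1 := by
    intro i
    rw [Matrix.fromBlocks_conjTranspose, Matrix.fromBlocks_multiply]
    have h1 : (P1 i)ᴴ * P1 i = 1 := Matrix.mem_unitaryGroup_iff'.mp (hP1 i)
    have h2 : (P2 i)ᴴ * P2 i = 1 := Matrix.mem_unitaryGroup_iff'.mp (hP2 i)
    simp [h1, h2, ← Matrix.fromBlocks_one]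
  unfold lindblad
  ext x y
  simp only [Matrix.toBlocks₁₂, Matrix.of_apply, Matrix.sum_apply]
  refine Finset.sum_congr rfl fun i _ => ?_
  rw [hF]
  have : Matrix.fromBlocks (P1 i) 0 0 (P2 i) * ρ * (Matrix.fromBlocks (P1 i) 0 0 (P2 i))ᴴ
      = Matrix.fromBlocks (P1 i * ρ.toBlocks₁₁ * (P1 i)ᴴ) (P1 i * ρ.toBlocks₁₂ * (P2 i)ᴴ)
        (P2 i * ρ.toBlocks₂₁ * (P1 i)ᴴ) (P2 i * ρ.toBlocks₂₂ * (P2 i)ᴴ) := by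
    conv_lhs => rw [← ρ.fromBlocks_toBlocks]
    rw [Matrix.fromBlocks_conjTranspose, Matrix.fromBlocks_multiply, Matrix.fromBlocks_multiply]
    simp [Matrix.mul_assoc]
  rw [this]
  simp [Matrix.toBlocks₁₂, Matrix.smul_apply, Matrix.sub_apply, Matrix.add_apply]
  left; ring
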